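/- Let n be a positive integer and let H be a finite group having both property T(n,SK) and property T(n,GK). Then the number of group homomorphisms from G_n(SK) to H equals the number of group homomorphisms from G_n(GK) to H. -/

import Mathlib

/-- Relators of G₁(SK) = ⟨B, D, E | B D B = D B D, E D E = D E D⟩, with B, D, E = 0, 1, 2. -/
def G1SKRels : Set (FreeGroup (Fin 3)) :=
  let B : FreeGroup (Fin 3) := FreeGroup.of 0
  let D : FreeGroup (Fin 3) := FreeGroup.of 1
  let E : FreeGroup (Fin 3) := FreeGroup.of 2
  {B * D * B * (D * B * D)⁻¹,
   E * D * E * (D * E * D)⁻¹}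

/-- The knot group of the square knot (= that of the granny knot). -/
abbrev G1SK := PresentedGroup G1SKRels

/-- Relators of the n-th generalized knot group of the square knot:
⟨b, d, e | b dⁿ bⁿ = dⁿ bⁿ d, e dⁿ eⁿ = dⁿ eⁿ d, eⁿ dⁿ e d⁻ⁿ e⁻ⁿ = bⁿ dⁿ b d⁻ⁿ b⁻ⁿ⟩,
with b, d, e = 0, 1, 2. -/
def GnSKRels (n : ℕ) : Set (FreeGroup (Fin 3)) :=
  let b : FreeGroup (Fin 3) := FreeGroup.of 0
  let d : FreeGroup (Fin 3) := FreeGroup.of 1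
  let e : FreeGroup (Fin 3) := FreeGroup.of 2
  {b * d ^ n * b ^ n * (d ^ n * b ^ n * d)⁻¹,
   e * d ^ n * e ^ n * (d ^ n * e ^ n * d)⁻¹,
   e ^ n * d ^ n * e * (d ^ n)⁻¹ * (e ^ n)⁻¹ * (b ^ n * d ^ n * b * (d ^ n)⁻¹ * (b ^ n)⁻¹)⁻¹}

/-- The n-th generalized knot group of the square knot. -/
abbrev GnSK (n : ℕ) := PresentedGroup (GnSKRels n)

/-- Relators of the n-th generalized knot group of the granny knot:
⟨b, d, e | b dⁿ bⁿ = dⁿ bⁿ d, d eⁿ dⁿ = eⁿ dⁿ e, e⁻ⁿ d⁻ⁿ e dⁿ eⁿ = bⁿ dⁿ b d⁻ⁿ b⁻ⁿ⟩,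
with b, d, e = 0, 1, 2. -/
def GnGKRels (n : ℕ) : Set (FreeGroup (Fin 3)) :=
  let b : FreeGroup (Fin 3) := FreeGroup.of 0
  let d : FreeGroup (Fin 3) := FreeGroup.of 1
  let e : FreeGroup (Fin 3) := FreeGroup.of 2
  {b * d ^ n * b ^ n * (d ^ n * b ^ n * d)⁻¹,
   d * e ^ n * d ^ n * (e ^ n * d ^ n * e)⁻¹,
   (e ^ n)⁻¹ * (d ^ n)⁻¹ * e * d ^ n * e ^ n * (b ^ n * d ^ n * b * (d ^ n)⁻¹ * (b ^ n)⁻¹)⁻¹}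

/-- The n-th generalized knot group of the granny knot. -/
abbrev GnGK (n : ℕ) := PresentedGroup (GnGKRels n)

/-- A group `H` has property T(n,SK) if for every homomorphism ρ : G₁(SK) → H and every
g ∈ H with gⁿ = ρ(D), one has (ρ(E)ρ(D))³ g (ρ(E)ρ(D))⁻³ = (ρ(B)ρ(D))³ g (ρ(B)ρ(D))⁻³. -/
def PropertyTSK (n : ℕ) (H : Type*) [Group H] : Prop :=
  ∀ (ρ : G1SK →* H) (g : H), g ^ n = ρ (PresentedGroup.of 1) →
    (ρ (PresentedGroup.of 2) * ρ (PresentedGroup.of 1)) ^ 3 * g *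
      ((ρ (PresentedGroup.of 2) * ρ (PresentedGroup.of 1)) ^ 3)⁻¹ =
    (ρ (PresentedGroup.of 0) * ρ (PresentedGroup.of 1)) ^ 3 * g *
      ((ρ (PresentedGroup.of 0) * ρ (PresentedGroup.of 1)) ^ 3)⁻¹

/-- A group `H` has property T(n,GK) if for every homomorphism ρ : G₁(SK) → H and every
g ∈ H with gⁿ = ρ(D), setting b̂ = ρ(D) ρ(B) g ρ(B)⁻¹ ρ(D)⁻¹ and
ê = ρ(D)⁻¹ ρ(E)⁻¹ g ρ(E) ρ(D), one has ρ(E)⁻¹ ρ(D)⁻¹ ê ρ(D) ρ(E) = ρ(B) ρ(D) b̂ ρ(D)⁻¹ ρ(B)⁻¹. -/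
def PropertyTGK (n : ℕ) (H : Type*) [Group H] : Prop :=
  ∀ (ρ : G1SK →* H) (g : H), g ^ n = ρ (PresentedGroup.of 1) →
    ∀ bhat ehat : H,
      bhat = ρ (PresentedGroup.of 1) * ρ (PresentedGroup.of 0) * g *
        (ρ (PresentedGroup.of 0))⁻¹ * (ρ (PresentedGroup.of 1))⁻¹ →
      ehat = (ρ (PresentedGroup.of 1))⁻¹ * (ρ (PresentedGroup.of 2))⁻¹ * g *
        ρ (PresentedGroup.of 2) * ρ (PresentedGroup.of 1) →
      (ρ (PresentedGroup.of 2))⁻¹ * (ρ (PresentedGroup.of 1))⁻¹ * ehat *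
          ρ (PresentedGroup.of 1) * ρ (PresentedGroup.of 2) =
        ρ (PresentedGroup.of 0) * ρ (PresentedGroup.of 1) * bhat *
          (ρ (PresentedGroup.of 1))⁻¹ * (ρ (PresentedGroup.of 0))⁻¹


namespace Stmt13Aux

variable {H : Type*} [Group H]

lemma pow_shift {x z y : H} (h : x * z = z * y) : ∀ k : ℕ, x ^ k * z = z * y ^ k
  | 0 => by simp
  | (k+1) => by
      rw [pow_succ', mul_assoc, pow_shift h k, ← mul_assoc, h, mul_assoc, ← pow_succ']

lemma conj_pow_eq (a g : H) (k : ℕ) : (a * g * a⁻¹) ^ k = a * g ^ k * a⁻¹ := by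
  induction k with
  | zero => simp
  | succ k ih => rw [pow_succ, ih, pow_succ]; group

lemma conj_eq_conj {a b g : H} (h : g * (a⁻¹ * b) = (a⁻¹ * b) * g) :
    a * g * a⁻¹ = b * g * b⁻¹ := by
  have h3 : (a⁻¹ * b)⁻¹ * (g * (a⁻¹ * b)) = g := by rw [h]; group
  calc a * g * a⁻¹ = b * ((a⁻¹ * b)⁻¹ * (g * (a⁻¹ * b))) * b⁻¹ := by group
    _ = b * g * b⁻¹ := by rw [h3]

lemma lift_relator {α : Type*} {rels : Set (FreeGroup α)} (φ : PresentedGroup rels →* H)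
    {r : FreeGroup α} (hr : r ∈ rels) :
    FreeGroup.lift (fun i => φ (PresentedGroup.of i)) r = 1 := by
  have key : φ (PresentedGroup.mk rels r) =
      FreeGroup.lift (fun i => φ (PresentedGroup.of i)) r :=
    FreeGroup.lift_unique (φ.comp (PresentedGroup.mk rels)) (fun i => rfl)
  rw [← key]
  have h1 : PresentedGroup.mk rels r = 1 :=
    (QuotientGroup.eq_one_iff r).mpr (Subgroup.subset_normalClosure hr)
  rw [h1, map_one]

lemma braid_of_rel {x d : H} {n : ℕ} (h : x * d ^ n * x ^ n = d ^ n * x ^ n * d) :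
    x ^ n * d ^ n * x ^ n = d ^ n * x ^ n * d ^ n := by
  have h' : x * (d ^ n * x ^ n) = d ^ n * x ^ n * d := by rw [← mul_assoc]; exact h
  have h2 := pow_shift h' n
  rw [← mul_assoc] at h2
  exact h2

lemma braid_of_rel' {x d : H} {n : ℕ} (h : d * x ^ n * d ^ n = x ^ n * d ^ n * x) :
    x ^ n * d ^ n * x ^ n = d ^ n * x ^ n * d ^ n := by
  have h' : d * (x ^ n * d ^ n) = x ^ n * d ^ n * x := by rw [← mul_assoc]; exact h
  have h2 := pow_shift h' n
  rw [← mul_assoc] at h2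
  exact h2.symm

lemma conj_pow_n {B D g : H} {n : ℕ} (braid : B * D * B = D * B * D) (hg : g ^ n = D) :
    (D * B * g * B⁻¹ * D⁻¹) ^ n = B := by
  have h0 : D * B * g * B⁻¹ * D⁻¹ = (D * B) * g * (D * B)⁻¹ := by group
  rw [h0, conj_pow_eq, hg, ← braid]
  group

lemma conj_pow_n' {E D g : H} {n : ℕ} (braid : E * D * E = D * E * D) (hg : g ^ n = D) :
    (D⁻¹ * E⁻¹ * g * E * D) ^ n = E := by
  have h0 : D⁻¹ * E⁻¹ * g * E * D = (E * D)⁻¹ * g * ((E * D)⁻¹)⁻¹ := by group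
  rw [h0, conj_pow_eq, hg]
  have h1 : (E * D)⁻¹ * D * ((E * D)⁻¹)⁻¹ = D⁻¹ * E⁻¹ * (D * E * D) := by group
  rw [h1, ← braid]
  group

lemma rel3_side {D E g : H} (cg : g * D = D * g) (braid : E * D * E = D * E * D) :
    E * D * (D * E * g * E⁻¹ * D⁻¹) * D⁻¹ * E⁻¹ =
      D⁻¹ * ((E * D) ^ 3 * g * ((E * D) ^ 3)⁻¹) * D := by
  have hT : (E * D) ^ 3 = D * E * D * (D * E * D) := by
    rw [show (E * D) ^ 3 = E * D * E * (D * E * D) from by rw [pow_succ, pow_succ, pow_one]; group, braid]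
  rw [hT]
  have h4 : E * D * (D * E * g * E⁻¹ * D⁻¹) * D⁻¹ * E⁻¹ =
      (E * D * D * E) * g * (E * D * D * E)⁻¹ := by group
  have h5 : D⁻¹ * (D * E * D * (D * E * D) * g * (D * E * D * (D * E * D))⁻¹) * D =
      (E * D * D * E * D) * g * (E * D * D * E * D)⁻¹ := by group
  rw [h4, h5]
  apply conj_eq_conj
  rw [show (E * D * D * E)⁻¹ * (E * D * D * E * D) = D from by group]
  exact cg


section Main
variable {H : Type*} [Group H]

lemma g1_braidB (ρ : G1SK →* H) :
    ρ (PresentedGroup.of 0) * ρ (PresentedGroup.of 1) * ρ (PresentedGroup.of 0) =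
      ρ (PresentedGroup.of 1) * ρ (PresentedGroup.of 0) * ρ (PresentedGroup.of 1) := by
  have h := lift_relator ρ
    (r := FreeGroup.of 0 * FreeGroup.of 1 * FreeGroup.of 0 *
      (FreeGroup.of 1 * FreeGroup.of 0 * FreeGroup.of 1)⁻¹)
    (by unfold G1SKRels; exact Set.mem_insert _ _)
  simp only [map_mul, map_inv, FreeGroup.lift_apply_of] at h
  exact mul_inv_eq_one.mp h

lemma g1_braidE (ρ : G1SK →* H) :
    ρ (PresentedGroup.of 2) * ρ (PresentedGroup.of 1) * ρ (PresentedGroup.of 2) =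
      ρ (PresentedGroup.of 1) * ρ (PresentedGroup.of 2) * ρ (PresentedGroup.of 1) := by
  have h := lift_relator ρ
    (r := FreeGroup.of 2 * FreeGroup.of 1 * FreeGroup.of 2 *
      (FreeGroup.of 1 * FreeGroup.of 2 * FreeGroup.of 1)⁻¹)
    (by unfold G1SKRels; exact Set.mem_insert_of_mem _ rfl)
  simp only [map_mul, map_inv, FreeGroup.lift_apply_of] at h
  exact mul_inv_eq_one.mp h

lemma sk1 (n : ℕ) (φ : GnSK n →* H) :
    φ (PresentedGroup.of 0) * φ (PresentedGroup.of 1) ^ n * φ (PresentedGroup.of 0) ^ n =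
      φ (PresentedGroup.of 1) ^ n * φ (PresentedGroup.of 0) ^ n * φ (PresentedGroup.of 1) := by
  have h := lift_relator φ
    (r := FreeGroup.of 0 * FreeGroup.of 1 ^ n * FreeGroup.of 0 ^ n *
      (FreeGroup.of 1 ^ n * FreeGroup.of 0 ^ n * FreeGroup.of 1)⁻¹)
    (by unfold GnSKRels; exact Set.mem_insert _ _)
  simp only [map_mul, map_pow, map_inv, FreeGroup.lift_apply_of] at h
  exact mul_inv_eq_one.mp h

lemma sk2 (n : ℕ) (φ : GnSK n →* H) :
    φ (PresentedGroup.of 2) * φ (PresentedGroup.of 1) ^ n * φ (PresentedGroup.of 2) ^ n =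
      φ (PresentedGroup.of 1) ^ n * φ (PresentedGroup.of 2) ^ n * φ (PresentedGroup.of 1) := by
  have h := lift_relator φ
    (r := FreeGroup.of 2 * FreeGroup.of 1 ^ n * FreeGroup.of 2 ^ n *
      (FreeGroup.of 1 ^ n * FreeGroup.of 2 ^ n * FreeGroup.of 1)⁻¹)
    (by unfold GnSKRels; exact Set.mem_insert_of_mem _ (Set.mem_insert _ _))
  simp only [map_mul, map_pow, map_inv, FreeGroup.lift_apply_of] at h
  exact mul_inv_eq_one.mp h

lemma gk1 (n : ℕ) (φ : GnGK n →* H) :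
    φ (PresentedGroup.of 0) * φ (PresentedGroup.of 1) ^ n * φ (PresentedGroup.of 0) ^ n =
      φ (PresentedGroup.of 1) ^ n * φ (PresentedGroup.of 0) ^ n * φ (PresentedGroup.of 1) := by
  have h := lift_relator φ
    (r := FreeGroup.of 0 * FreeGroup.of 1 ^ n * FreeGroup.of 0 ^ n *
      (FreeGroup.of 1 ^ n * FreeGroup.of 0 ^ n * FreeGroup.of 1)⁻¹)
    (by unfold GnGKRels; exact Set.mem_insert _ _)
  simp only [map_mul, map_pow, map_inv, FreeGroup.lift_apply_of] at h
  exact mul_inv_eq_one.mp h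

lemma gk2 (n : ℕ) (φ : GnGK n →* H) :
    φ (PresentedGroup.of 1) * φ (PresentedGroup.of 2) ^ n * φ (PresentedGroup.of 1) ^ n =
      φ (PresentedGroup.of 2) ^ n * φ (PresentedGroup.of 1) ^ n * φ (PresentedGroup.of 2) := by
  have h := lift_relator φ
    (r := FreeGroup.of 1 * FreeGroup.of 2 ^ n * FreeGroup.of 1 ^ n *
      (FreeGroup.of 2 ^ n * FreeGroup.of 1 ^ n * FreeGroup.of 2)⁻¹)
    (by unfold GnGKRels; exact Set.mem_insert_of_mem _ (Set.mem_insert _ _))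
  simp only [map_mul, map_pow, map_inv, FreeGroup.lift_apply_of] at h
  exact mul_inv_eq_one.mp h

/-- homomorphism `G1SK →* H` from braid data. -/
def homG1 (B D E : H) (hB : B * D * B = D * B * D) (hE : E * D * E = D * E * D) :
    G1SK →* H :=
  PresentedGroup.toGroup (f := ![B, D, E]) (by
    intro r hr
    unfold G1SKRels at hr
    simp only [Set.mem_insert_iff, Set.mem_singleton_iff] at hr
    rcases hr with rfl | rfl <;>
      simp only [map_mul, map_inv, FreeGroup.lift_apply_of] <;> rw [mul_inv_eq_one]
    · exact hB
    · exact hE)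

@[simp] lemma homG1_of0 (B D E : H) (hB : B * D * B = D * B * D)
    (hE : E * D * E = D * E * D) : homG1 B D E hB hE (PresentedGroup.of 0) = B :=
  PresentedGroup.toGroup.of _
@[simp] lemma homG1_of1 (B D E : H) (hB : B * D * B = D * B * D)
    (hE : E * D * E = D * E * D) : homG1 B D E hB hE (PresentedGroup.of 1) = D :=
  PresentedGroup.toGroup.of _
@[simp] lemma homG1_of2 (B D E : H) (hB : B * D * B = D * B * D)
    (hE : E * D * E = D * E * D) : homG1 B D E hB hE (PresentedGroup.of 2) = E :=
  PresentedGroup.toGroup.of _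

/-- homomorphism `GnSK n →* H` from relation data. -/
def homSK (n : ℕ) (b d e : H)
    (h1 : b * d ^ n * b ^ n = d ^ n * b ^ n * d)
    (h2 : e * d ^ n * e ^ n = d ^ n * e ^ n * d)
    (h3 : e ^ n * d ^ n * e * (d ^ n)⁻¹ * (e ^ n)⁻¹ =
      b ^ n * d ^ n * b * (d ^ n)⁻¹ * (b ^ n)⁻¹) : GnSK n →* H :=
  PresentedGroup.toGroup (f := ![b, d, e]) (by
    intro r hr
    unfold GnSKRels at hr
    simp only [Set.mem_insert_iff, Set.mem_singleton_iff] at hr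
    rcases hr with rfl | rfl | rfl <;>
      simp only [map_mul, map_pow, map_inv, FreeGroup.lift_apply_of] <;> rw [mul_inv_eq_one]
    · exact h1
    · exact h2
    · exact h3)

@[simp] lemma homSK_of0 (n : ℕ) (b d e : H) (h1) (h2) (h3) :
    homSK n b d e h1 h2 h3 (PresentedGroup.of 0) = b := PresentedGroup.toGroup.of _
@[simp] lemma homSK_of1 (n : ℕ) (b d e : H) (h1) (h2) (h3) :
    homSK n b d e h1 h2 h3 (PresentedGroup.of 1) = d := PresentedGroup.toGroup.of _
@[simp] lemma homSK_of2 (n : ℕ) (b d e : H) (h1) (h2) (h3) :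
    homSK n b d e h1 h2 h3 (PresentedGroup.of 2) = e := PresentedGroup.toGroup.of _

/-- homomorphism `GnGK n →* H` from relation data. -/
def homGK (n : ℕ) (b d e : H)
    (h1 : b * d ^ n * b ^ n = d ^ n * b ^ n * d)
    (h2 : d * e ^ n * d ^ n = e ^ n * d ^ n * e)
    (h3 : (e ^ n)⁻¹ * (d ^ n)⁻¹ * e * d ^ n * e ^ n =
      b ^ n * d ^ n * b * (d ^ n)⁻¹ * (b ^ n)⁻¹) : GnGK n →* H :=
  PresentedGroup.toGroup (f := ![b, d, e]) (by
    intro r hr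
    unfold GnGKRels at hr
    simp only [Set.mem_insert_iff, Set.mem_singleton_iff] at hr
    rcases hr with rfl | rfl | rfl <;>
      simp only [map_mul, map_pow, map_inv, FreeGroup.lift_apply_of] <;> rw [mul_inv_eq_one]
    · exact h1
    · exact h2
    · exact h3)

@[simp] lemma homGK_of0 (n : ℕ) (b d e : H) (h1) (h2) (h3) :
    homGK n b d e h1 h2 h3 (PresentedGroup.of 0) = b := PresentedGroup.toGroup.of _
@[simp] lemma homGK_of1 (n : ℕ) (b d e : H) (h1) (h2) (h3) :
    homGK n b d e h1 h2 h3 (PresentedGroup.of 1) = d := PresentedGroup.toGroup.of _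
@[simp] lemma homGK_of2 (n : ℕ) (b d e : H) (h1) (h2) (h3) :
    homGK n b d e h1 h2 h3 (PresentedGroup.of 2) = e := PresentedGroup.toGroup.of _

lemma bk_rel1 {B D g : H} {n : ℕ} (braid : B * D * B = D * B * D) (hg : g ^ n = D) :
    (D * B * g * B⁻¹ * D⁻¹) * g ^ n * (D * B * g * B⁻¹ * D⁻¹) ^ n =
      g ^ n * (D * B * g * B⁻¹ * D⁻¹) ^ n * g := by
  rw [conj_pow_n braid hg, hg]; group

lemma bk_rel2SK {E D g : H} {n : ℕ} (braid : E * D * E = D * E * D) (hg : g ^ n = D) :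
    (D * E * g * E⁻¹ * D⁻¹) * g ^ n * (D * E * g * E⁻¹ * D⁻¹) ^ n =
      g ^ n * (D * E * g * E⁻¹ * D⁻¹) ^ n * g := by
  rw [conj_pow_n braid hg, hg]; group

lemma bk_rel2GK {E D g : H} {n : ℕ} (braid : E * D * E = D * E * D) (hg : g ^ n = D) :
    g * (D⁻¹ * E⁻¹ * g * E * D) ^ n * g ^ n =
      (D⁻¹ * E⁻¹ * g * E * D) ^ n * g ^ n * (D⁻¹ * E⁻¹ * g * E * D) := by
  rw [conj_pow_n' braid hg, hg]; group

lemma g_comm {D g : H} {n : ℕ} (hg : g ^ n = D) : g * D = D * g := by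
  rw [← hg]; exact ((pow_succ' g n).symm.trans (pow_succ g n))

lemma bk_rel3SK {B D E g : H} {n : ℕ}
    (braidB : B * D * B = D * B * D) (braidE : E * D * E = D * E * D) (hg : g ^ n = D)
    (key : (E * D) ^ 3 * g * ((E * D) ^ 3)⁻¹ = (B * D) ^ 3 * g * ((B * D) ^ 3)⁻¹) :
    (D * E * g * E⁻¹ * D⁻¹) ^ n * g ^ n * (D * E * g * E⁻¹ * D⁻¹) * (g ^ n)⁻¹ *
        ((D * E * g * E⁻¹ * D⁻¹) ^ n)⁻¹ =
      (D * B * g * B⁻¹ * D⁻¹) ^ n * g ^ n * (D * B * g * B⁻¹ * D⁻¹) * (g ^ n)⁻¹ *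
        ((D * B * g * B⁻¹ * D⁻¹) ^ n)⁻¹ := by
  rw [conj_pow_n braidB hg, conj_pow_n braidE hg, hg]
  rw [rel3_side (g_comm hg) braidE, rel3_side (g_comm hg) braidB, key]

lemma bk_rel3GK {B D E g : H} {n : ℕ}
    (braidB : B * D * B = D * B * D) (braidE : E * D * E = D * E * D) (hg : g ^ n = D)
    (key : E⁻¹ * D⁻¹ * (D⁻¹ * E⁻¹ * g * E * D) * D * E =
      B * D * (D * B * g * B⁻¹ * D⁻¹) * D⁻¹ * B⁻¹) :
    ((D⁻¹ * E⁻¹ * g * E * D) ^ n)⁻¹ * (g ^ n)⁻¹ * (D⁻¹ * E⁻¹ * g * E * D) * g ^ n *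
        (D⁻¹ * E⁻¹ * g * E * D) ^ n =
      (D * B * g * B⁻¹ * D⁻¹) ^ n * g ^ n * (D * B * g * B⁻¹ * D⁻¹) * (g ^ n)⁻¹ *
        ((D * B * g * B⁻¹ * D⁻¹) ^ n)⁻¹ := by
  rw [conj_pow_n braidB hg, conj_pow_n' braidE hg, hg]
  exact key

lemma rt1 {b d : H} {n : ℕ} (h : b * d ^ n * b ^ n = d ^ n * b ^ n * d) :
    d ^ n * b ^ n * d * (b ^ n)⁻¹ * (d ^ n)⁻¹ = b := by
  rw [← h]; group

lemma rt2 {e d : H} {n : ℕ} (h : d * e ^ n * d ^ n = e ^ n * d ^ n * e) :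
    (d ^ n)⁻¹ * (e ^ n)⁻¹ * d * e ^ n * d ^ n = e := by
  have h' : (e ^ n * d ^ n)⁻¹ * (d * e ^ n * d ^ n) = e := by rw [h]; group
  calc (d ^ n)⁻¹ * (e ^ n)⁻¹ * d * e ^ n * d ^ n
      = (e ^ n * d ^ n)⁻¹ * (d * e ^ n * d ^ n) := by group
    _ = e := h'


lemma hom_ext3 {rels : Set (FreeGroup (Fin 3))} {φ ψ : PresentedGroup rels →* H}
    (h0 : φ (PresentedGroup.of 0) = ψ (PresentedGroup.of 0))
    (h1 : φ (PresentedGroup.of 1) = ψ (PresentedGroup.of 1))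
    (h2 : φ (PresentedGroup.of 2) = ψ (PresentedGroup.of 2)) : φ = ψ :=
  PresentedGroup.ext (fun x => by
    fin_cases x
    · exact h0
    · exact h1
    · exact h2)

/-- The key bijection for the square knot side. -/
noncomputable def equivSK (n : ℕ) (hTSK : PropertyTSK n H) :
    (GnSK n →* H) ≃ {p : (G1SK →* H) × H // p.2 ^ n = p.1 (PresentedGroup.of 1)} where
  toFun φ := ⟨(homG1 (φ (PresentedGroup.of 0) ^ n) (φ (PresentedGroup.of 1) ^ n)
      (φ (PresentedGroup.of 2) ^ n) (braid_of_rel (sk1 n φ)) (braid_of_rel (sk2 n φ)),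
      φ (PresentedGroup.of 1)),
      by exact (homG1_of1 (φ (PresentedGroup.of 0) ^ n) (φ (PresentedGroup.of 1) ^ n)
        (φ (PresentedGroup.of 2) ^ n) (braid_of_rel (sk1 n φ)) (braid_of_rel (sk2 n φ))).symm⟩
  invFun p := homSK n
      (p.1.1 (PresentedGroup.of 1) * p.1.1 (PresentedGroup.of 0) * p.1.2 *
        (p.1.1 (PresentedGroup.of 0))⁻¹ * (p.1.1 (PresentedGroup.of 1))⁻¹)
      p.1.2
      (p.1.1 (PresentedGroup.of 1) * p.1.1 (PresentedGroup.of 2) * p.1.2 *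
        (p.1.1 (PresentedGroup.of 2))⁻¹ * (p.1.1 (PresentedGroup.of 1))⁻¹)
      (bk_rel1 (g1_braidB p.1.1) p.2)
      (bk_rel2SK (g1_braidE p.1.1) p.2)
      (bk_rel3SK (g1_braidB p.1.1) (g1_braidE p.1.1) p.2 (hTSK p.1.1 p.1.2 p.2))
  left_inv φ := by
    apply hom_ext3
    · simp only [homSK_of0, homG1_of0, homG1_of1]
      exact rt1 (sk1 n φ)
    · simp only [homSK_of1]
    · simp only [homSK_of2, homG1_of1, homG1_of2]
      exact rt1 (sk2 n φ)
  right_inv p := by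
    obtain ⟨⟨ρ, g⟩, hg⟩ := p
    refine Subtype.ext (Prod.ext ?_ ?_)
    · apply hom_ext3
      · simp only [homG1_of0, homSK_of0, homSK_of1]
        exact conj_pow_n (g1_braidB ρ) hg
      · simp only [homG1_of1, homSK_of1]
        exact hg
      · simp only [homG1_of2, homSK_of1, homSK_of2]
        exact conj_pow_n (g1_braidE ρ) hg
    · simp only [homSK_of1]

/-- The key bijection for the granny knot side. -/
noncomputable def equivGK (n : ℕ) (hTGK : PropertyTGK n H) :
    (GnGK n →* H) ≃ {p : (G1SK →* H) × H // p.2 ^ n = p.1 (PresentedGroup.of 1)} where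
  toFun φ := ⟨(homG1 (φ (PresentedGroup.of 0) ^ n) (φ (PresentedGroup.of 1) ^ n)
      (φ (PresentedGroup.of 2) ^ n) (braid_of_rel (gk1 n φ)) (braid_of_rel' (gk2 n φ)),
      φ (PresentedGroup.of 1)),
      by exact (homG1_of1 (φ (PresentedGroup.of 0) ^ n) (φ (PresentedGroup.of 1) ^ n)
        (φ (PresentedGroup.of 2) ^ n) (braid_of_rel (gk1 n φ)) (braid_of_rel' (gk2 n φ))).symm⟩
  invFun p := homGK n
      (p.1.1 (PresentedGroup.of 1) * p.1.1 (PresentedGroup.of 0) * p.1.2 *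
        (p.1.1 (PresentedGroup.of 0))⁻¹ * (p.1.1 (PresentedGroup.of 1))⁻¹)
      p.1.2
      ((p.1.1 (PresentedGroup.of 1))⁻¹ * (p.1.1 (PresentedGroup.of 2))⁻¹ * p.1.2 *
        p.1.1 (PresentedGroup.of 2) * p.1.1 (PresentedGroup.of 1))
      (bk_rel1 (g1_braidB p.1.1) p.2)
      (bk_rel2GK (g1_braidE p.1.1) p.2)
      (bk_rel3GK (g1_braidB p.1.1) (g1_braidE p.1.1) p.2
        (hTGK p.1.1 p.1.2 p.2 _ _ rfl rfl))
  left_inv φ := by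
    apply hom_ext3
    · simp only [homGK_of0, homG1_of0, homG1_of1]
      exact rt1 (gk1 n φ)
    · simp only [homGK_of1]
    · simp only [homGK_of2, homG1_of1, homG1_of2]
      exact rt2 (gk2 n φ)
  right_inv p := by
    obtain ⟨⟨ρ, g⟩, hg⟩ := p
    refine Subtype.ext (Prod.ext ?_ ?_)
    · apply hom_ext3
      · simp only [homG1_of0, homGK_of0, homGK_of1]
        exact conj_pow_n (g1_braidB ρ) hg
      · simp only [homG1_of1, homGK_of1]
        exact hg
      · simp only [homG1_of2, homGK_of1, homGK_of2]
        exact conj_pow_n' (g1_braidE ρ) hg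
    · simp only [homGK_of1]

end Main
end Stmt13Aux

theorem stmt_13 (n : ℕ) (hn : 0 < n) (H : Type*) [Group H] [Finite H]
    (hTSK : PropertyTSK n H) (hTGK : PropertyTGK n H) :
    Nat.card (GnSK n →* H) = Nat.card (GnGK n →* H) := by
  exact (Nat.card_congr (Stmt13Aux.equivSK n hTSK)).trans
    (Nat.card_congr (Stmt13Aux.equivGK n hTGK)).symm
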